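/- Let n ≥ 2 and 1 < p, p̄₁, p̄₂ < ∞. The constant p · ω_n^{1/p̄₂ - 1/p̄₁} in the mixed radial-angular inequality for the dual Hardy operator is sharp: if C ≥ 0 is a constant such that ‖H* f‖_{L^p_{|x|}L^{p̄₂}_θ} ≤ C · ‖f‖_{L^p_{|x|}L^{p̄₁}_θ} for all nonnegative measurable f on ℝⁿ, then C ≥ p · ω_n^{1/p̄₂ - 1/p̄₁}. -/

import Mathlib

/-!
Test the inequality on `f_a(x) = |x|^{-a} χ_{|x|>1}` with `a > n/p`. Both `f_a` and
`H* f_a = (n/a) max(|x|, 1)^{-a}` are radial, and on radial functions the mixed norm factors as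
`ω_n^{1/p̄}` times the `L^p(r^{n-1} dr)` norm of the profile. As `H* f_a ≥ (n/a) f_a` and the
norm of `f_a` is finite and positive, the inequality forces `ω_n^{1/p̄₂ - 1/p̄₁} · n/a ≤ C`;
let `a ↓ n/p`.
-/

open MeasureTheory Metric Set

noncomputable section

/-- Euclidean space ℝⁿ. -/
abbrev Euc (n : ℕ) := EuclideanSpace ℝ (Fin n)

/-- Volume of the unit ball in ℝⁿ: Ω_n = π^(n/2) / Γ(1 + n/2). -/
def ballVol (n : ℕ) : ℝ := Real.pi ^ ((n : ℝ) / 2) / Real.Gamma (1 + (n : ℝ) / 2)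

/-- Surface measure of the unit sphere S^{n-1}: ω_n = 2π^(n/2) / Γ(n/2). -/
def sphArea (n : ℕ) : ℝ := 2 * Real.pi ^ ((n : ℝ) / 2) / Real.Gamma ((n : ℝ) / 2)

/-- The surface measure dθ on the unit sphere S^{n-1} ⊂ ℝⁿ (total mass ω_n = n·Ω_n). -/
def sphereMeasure (n : ℕ) : Measure (sphere (0 : Euc n) 1) :=
  (volume : Measure (Euc n)).toSphere

/-- Mixed radial-angular norm
‖f‖ = (∫₀^∞ (∫_{S^{n-1}} |f(rθ)|^{p̄} dθ)^{p/p̄} r^{n-1} dr)^{1/p}. -/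
def mixedNorm (n : ℕ) (p pb : ℝ) (f : Euc n → ℝ) : ℝ :=
  (∫ r in Ioi (0 : ℝ),
      (∫ θ, |f (r • (θ : Euc n))| ^ pb ∂(sphereMeasure n)) ^ (p / pb) * r ^ ((n : ℝ) - 1)) ^ (1 / p)

/-- Weak mixed radial-angular norm: sup_{λ>0} λ‖χ_{|f|>λ}‖. -/
def wMixedNorm (n : ℕ) (p pb : ℝ) (f : Euc n → ℝ) : ℝ :=
  ⨆ l : {l : ℝ // 0 < l},
    l.1 * mixedNorm n p pb (indicator {x | l.1 < |f x|} fun _ => (1 : ℝ))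

/-- n-dimensional Hardy operator H f(x) = (Ω_n |x|ⁿ)⁻¹ ∫_{|y|<|x|} f(y) dy. -/
def hardyOp (n : ℕ) (f : Euc n → ℝ) (x : Euc n) : ℝ :=
  (ballVol n * ‖x‖ ^ n)⁻¹ * ∫ y in {y : Euc n | ‖y‖ < ‖x‖}, f y

/-- Dual Hardy operator H* f(x) = ∫_{|y|≥|x|} f(y)/(Ω_n |y|ⁿ) dy. -/
def dualHardyOp (n : ℕ) (f : Euc n → ℝ) (x : Euc n) : ℝ :=
  ∫ y in {y : Euc n | ‖x‖ ≤ ‖y‖}, f y / (ballVol n * ‖y‖ ^ n)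

/-- Fractional Hardy operator H_β f(x) = (Ω_n^{1/n}|x|)^{β-n} ∫_{|y|<|x|} f(y) dy. -/
def fracHardyOp (n : ℕ) (β : ℝ) (f : Euc n → ℝ) (x : Euc n) : ℝ :=
  (ballVol n ^ ((1 : ℝ) / n) * ‖x‖) ^ (-((n : ℝ) - β)) * ∫ y in {y : Euc n | ‖y‖ < ‖x‖}, f y

/-- L^p norm on ℝⁿ. -/
def lpNorm (n : ℕ) (p : ℝ) (f : Euc n → ℝ) : ℝ := (∫ x : Euc n, |f x| ^ p) ^ (1 / p)

/-- Beta function B(a,b) = ∫₀¹ t^{a-1}(1-t)^{b-1} dt. -/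
def betaFn (a b : ℝ) : ℝ := ∫ t in (0 : ℝ)..1, t ^ (a - 1) * (1 - t) ^ (b - 1)

/-- Sharp constant C_{p,q,n,β} = (p'/q)^{1/q}((n/(qβ))·B(n/(qβ), n/(q'β)))^{-β/n}. -/
def fracHardyConst (p q : ℝ) (n : ℕ) (β : ℝ) : ℝ :=
  (p / (p - 1) / q) ^ (1 / q) *
    ((n / (q * β)) * betaFn ((n : ℝ) / (q * β)) ((n : ℝ) / ((q / (q - 1)) * β))) ^ (-(β / (n : ℝ)))

open Filter Topology

lemma ballVol_pos (n : ℕ) : 0 < ballVol n := by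
  have := Real.Gamma_pos_of_pos (by positivity : (0 : ℝ) < 1 + n / 2)
  unfold ballVol
  positivity

lemma sphArea_eq_mul_ballVol (n : ℕ) : sphArea n = n * ballVol n := by
  rcases Nat.eq_zero_or_pos n with rfl | hn
  · simp [sphArea, Real.Gamma_zero]
  have hn2 : (n : ℝ) / 2 ≠ 0 := by positivity
  rw [sphArea, ballVol, add_comm, Real.Gamma_add_one hn2]
  field_simp

lemma sphArea_pos {n : ℕ} (hn : 0 < n) : 0 < sphArea n := by
  rw [sphArea_eq_mul_ballVol]
  have := ballVol_pos n
  positivity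

lemma volume_real_ball_zero_one {n : ℕ} (hn : 0 < n) :
    volume.real (ball (0 : Euc n) 1) = ballVol n := by
  have : Nonempty (Fin n) := Fin.pos_iff_nonempty.mp hn
  have hsqrt : Real.sqrt Real.pi ^ n = Real.pi ^ ((n : ℝ) / 2) := by
    rw [Real.sqrt_eq_rpow, ← Real.rpow_natCast, ← Real.rpow_mul Real.pi_pos.le, one_div,
      inv_mul_eq_div]
  rw [measureReal_def, EuclideanSpace.volume_ball, Fintype.card_fin, hsqrt, add_comm]
  simp only [ENNReal.ofReal_one, one_pow, one_mul]
  exact ENNReal.toReal_ofReal (ballVol_pos n).le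

lemma sphereMeasure_real_univ {n : ℕ} (hn : 0 < n) : (sphereMeasure n).real univ = sphArea n := by
  rw [measureReal_def, sphereMeasure, Measure.toSphere_apply_univ, finrank_euclideanSpace_fin,
    ENNReal.toReal_mul, ← measureReal_def, volume_real_ball_zero_one hn, sphArea_eq_mul_ballVol]
  simp

lemma integral_fun_norm {n : ℕ} (hn : 0 < n) (f : ℝ → ℝ) :
    ∫ x : Euc n, f ‖x‖ = sphArea n * ∫ r in Ioi 0, r ^ (n - 1) * f r := by
  have : Nontrivial (Euc n) := Module.nontrivial_of_finrank_pos (R := ℝ) (by simpa using hn)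
  rw [integral_fun_norm_addHaar, finrank_euclideanSpace_fin, volume_real_ball_zero_one hn,
    sphArea_eq_mul_ballVol, nsmul_eq_mul, smul_eq_mul]
  simp only [smul_eq_mul, mul_assoc]

def radialNorm (n : ℕ) (p : ℝ) (g : ℝ → ℝ) : ℝ :=
  (∫ r in Ioi (0 : ℝ), |g r| ^ p * r ^ ((n : ℝ) - 1)) ^ (1 / p)

lemma setIntegral_abs_rpow_mul_rpow_nonneg (n : ℕ) (p : ℝ) (g : ℝ → ℝ) :
    0 ≤ ∫ r in Ioi (0 : ℝ), |g r| ^ p * r ^ ((n : ℝ) - 1) :=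
  setIntegral_nonneg measurableSet_Ioi fun r hr => by
    have : (0 : ℝ) < r := hr
    positivity

lemma mixedNorm_of_radial {n : ℕ} (hn : 0 < n) {p pb : ℝ} (hp : p ≠ 0) (hpb : pb ≠ 0)
    (g : ℝ → ℝ) :
    mixedNorm n p pb (fun x => g ‖x‖) = sphArea n ^ (1 / pb) * radialNorm n p g := by
  have hω := (sphArea_pos hn).le
  have hsphere : ∀ r ∈ Ioi (0 : ℝ), ∀ θ : sphere (0 : Euc n) 1, ‖r • (θ : Euc n)‖ = r :=
    fun r hr θ => by rw [norm_smul, norm_eq_of_mem_sphere θ, mul_one, Real.norm_of_nonneg hr.le]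
  have hangular : ∀ r ∈ Ioi (0 : ℝ),
      (∫ θ, |g ‖r • (θ : Euc n)‖| ^ pb ∂sphereMeasure n) ^ (p / pb) * r ^ ((n : ℝ) - 1) =
        sphArea n ^ (p / pb) * (|g r| ^ p * r ^ ((n : ℝ) - 1)) := fun r hr => by
    simp only [hsphere r hr, integral_const, sphereMeasure_real_univ hn, smul_eq_mul]
    rw [Real.mul_rpow hω (by positivity), ← Real.rpow_mul (abs_nonneg _),
      mul_div_cancel₀ _ hpb, mul_assoc]
  rw [mixedNorm, setIntegral_congr_fun measurableSet_Ioi hangular, integral_const_mul,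
    Real.mul_rpow (by positivity) (setIntegral_abs_rpow_mul_rpow_nonneg n p g),
    ← Real.rpow_mul hω, radialNorm]
  congr 2
  field_simp

lemma radialNorm_const_mul (n : ℕ) {p : ℝ} (hp : p ≠ 0) (c : ℝ) (g : ℝ → ℝ) :
    radialNorm n p (fun r => c * g r) = |c| * radialNorm n p g := by
  simp only [radialNorm, abs_mul, Real.mul_rpow (abs_nonneg c) (abs_nonneg _), mul_assoc,
    integral_const_mul]
  rw [Real.mul_rpow (by positivity) (setIntegral_abs_rpow_mul_rpow_nonneg n p g),
    ← Real.rpow_mul (abs_nonneg c), mul_one_div_cancel hp, Real.rpow_one]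

lemma radialNorm_mono {n : ℕ} {p : ℝ} (hp : 0 ≤ p) {f g : ℝ → ℝ}
    (hfg : ∀ r > 0, |f r| ≤ |g r|)
    (hg : IntegrableOn (fun r => |g r| ^ p * r ^ ((n : ℝ) - 1)) (Ioi 0)) :
    radialNorm n p f ≤ radialNorm n p g := by
  refine Real.rpow_le_rpow (setIntegral_abs_rpow_mul_rpow_nonneg n p f) ?_ (by positivity)
  refine integral_mono_of_nonneg ?_ hg ?_
  · filter_upwards [ae_restrict_mem measurableSet_Ioi] with r (hr : 0 < r)
    positivity
  · filter_upwards [ae_restrict_mem measurableSet_Ioi] with r (hr : 0 < r)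
    exact mul_le_mul_of_nonneg_right (Real.rpow_le_rpow (abs_nonneg _) (hfg r hr) hp)
      (by positivity)

lemma dualHardyOp_radial {n : ℕ} (hn : 0 < n) (g : ℝ → ℝ) (x : Euc n) :
    dualHardyOp n (fun y => g ‖y‖) x = n * ∫ r in Ioi ‖x‖, g r / r := by
  have hΩ := (ballVol_pos n).ne'
  have hpolar : ∀ r ∈ Ioi (0 : ℝ),
      r ^ (n - 1) * (Ici ‖x‖).indicator (fun s => g s / (ballVol n * s ^ n)) r =
        (Ici ‖x‖).indicator (fun s => (ballVol n)⁻¹ * (g s / s)) r := fun r (hr : 0 < r) => by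
    by_cases hrx : r ∈ Ici ‖x‖
    · rw [indicator_of_mem hrx, indicator_of_mem hrx, ← Nat.sub_add_cancel hn, pow_succ,
        Nat.add_sub_cancel]
      field_simp
    · simp [indicator_of_notMem hrx]
  rw [dualHardyOp, ← integral_indicator (measurableSet_le measurable_const measurable_norm)]
  change ∫ y, (Ici ‖x‖).indicator (fun s => g s / (ballVol n * s ^ n)) ‖y‖ = _
  rw [integral_fun_norm hn, setIntegral_congr_fun measurableSet_Ioi hpolar,
    ← integral_Ici_eq_integral_Ioi, setIntegral_indicator measurableSet_Ici, Ici_inter_Ici,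
    max_eq_right (norm_nonneg x), integral_Ici_eq_integral_Ioi, integral_const_mul,
    sphArea_eq_mul_ballVol]
  field_simp

def powerTail (a : ℝ) : ℝ → ℝ := (Ioi 1).indicator fun r => r ^ (-a)

lemma powerTail_nonneg (a r : ℝ) : 0 ≤ powerTail a r :=
  indicator_nonneg (fun r (hr : 1 < r) => by positivity) r

lemma measurable_powerTail (a : ℝ) : Measurable (powerTail a) :=
  (measurable_id.pow_const _).indicator measurableSet_Ioi

lemma dualHardyOp_powerTail {n : ℕ} (hn : 0 < n) {a : ℝ} (ha : 0 < a) (x : Euc n) :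
    dualHardyOp n (fun y => powerTail a ‖y‖) x = n / a * max ‖x‖ 1 ^ (-a) := by
  have hdiv : ∀ r ∈ Ioi ‖x‖, powerTail a r / r = (Ioi 1).indicator (fun r => r ^ (-a - 1)) r :=
    fun r _ => by
      by_cases hr : r ∈ Ioi (1 : ℝ)
      · rw [powerTail, indicator_of_mem hr, indicator_of_mem hr,
          Real.rpow_sub (zero_lt_one.trans hr), Real.rpow_one]
      · simp [powerTail, indicator_of_notMem hr]
  rw [dualHardyOp_radial hn, setIntegral_congr_fun measurableSet_Ioi hdiv,
    setIntegral_indicator measurableSet_Ioi, Ioi_inter_Ioi,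
    integral_Ioi_rpow_of_lt (by linarith) (lt_max_of_lt_right zero_lt_one)]
  simp only [sub_add_cancel]
  field_simp

lemma radialNorm_powerTail (n : ℕ) {p a : ℝ} (hp : 0 < p) (hap : n < a * p) :
    radialNorm n p (powerTail a) = (a * p - n)⁻¹ ^ (1 / p) := by
  have hpow : ∀ r ∈ Ioi (0 : ℝ), |powerTail a r| ^ p * r ^ ((n : ℝ) - 1) =
      (Ioi 1).indicator (fun r => r ^ ((n : ℝ) - 1 - a * p)) r := fun r (hr : 0 < r) => by
    by_cases hr1 : r ∈ Ioi (1 : ℝ)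
    · rw [powerTail, indicator_of_mem hr1, indicator_of_mem hr1, abs_of_nonneg (by positivity),
        ← Real.rpow_mul hr.le, ← Real.rpow_add hr]
      ring_nf
    · simp [powerTail, indicator_of_notMem hr1, Real.zero_rpow hp.ne']
  rw [radialNorm, setIntegral_congr_fun measurableSet_Ioi hpow,
    setIntegral_indicator measurableSet_Ioi, Ioi_inter_Ioi, max_eq_right zero_le_one,
    integral_Ioi_rpow_of_lt (by linarith) zero_lt_one, Real.one_rpow,
    show (n : ℝ) - 1 - a * p + 1 = -(a * p - n) by ring, div_neg, neg_div, neg_neg, one_div]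

lemma integrableOn_max_one_rpow_mul_rpow {b s : ℝ} (hs : 0 < s) (hsb : s < b) :
    IntegrableOn (fun r : ℝ => max r 1 ^ (-b) * r ^ (s - 1)) (Ioi 0) := by
  rw [← Ioc_union_Ioi_eq_Ioi zero_le_one]
  refine IntegrableOn.union ?_ ?_
  · refine (integrableOn_congr_fun (fun r hr => ?_) measurableSet_Ioc).mpr
      ((intervalIntegrable_iff_integrableOn_Ioc_of_le zero_le_one).mp
        (intervalIntegral.intervalIntegrable_rpow' (r := s - 1) (by linarith)))
    rw [max_eq_right hr.2, Real.one_rpow, one_mul]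
  · refine (integrableOn_congr_fun (fun r (hr : 1 < r) => ?_) measurableSet_Ioi).mpr
      (integrableOn_Ioi_rpow_of_lt (by linarith : s - 1 - b < -1) zero_lt_one)
    rw [max_eq_left hr.le, ← Real.rpow_add (zero_lt_one.trans hr)]
    ring_nf

lemma mul_radialNorm_powerTail_le {n : ℕ} (hn : 0 < n) {p a : ℝ} (hp : 0 < p) (hap : n < a * p) :
    n / a * radialNorm n p (powerTail a) ≤ radialNorm n p (fun r => n / a * max r 1 ^ (-a)) := by
  have ha : 0 < a := pos_of_mul_pos_left ((Nat.cast_pos.mpr hn).trans hap) hp.le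
  have hna : 0 < (n : ℝ) / a := by positivity
  have hscale := radialNorm_const_mul n hp.ne' (n / a) (powerTail a)
  rw [abs_of_pos hna] at hscale
  rw [← hscale]
  refine radialNorm_mono hp.le (fun r hr => ?_) ?_
  · by_cases hr1 : r ∈ Ioi (1 : ℝ)
    · rw [powerTail, indicator_of_mem hr1, max_eq_left (le_of_lt hr1)]
    · simp only [powerTail, indicator_of_notMem hr1, mul_zero, abs_zero]
      positivity
  · refine (integrableOn_congr_fun (fun r (hr : 0 < r) => ?_) measurableSet_Ioi).mpr
      ((integrableOn_max_one_rpow_mul_rpow (Nat.cast_pos.mpr hn) hap).const_mul ((n / a) ^ p))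
    have hmax : 0 < max r 1 := lt_max_of_lt_right zero_lt_one
    rw [abs_of_pos (by positivity), Real.mul_rpow hna.le (by positivity), ← Real.rpow_mul hmax.le,
      mul_assoc, neg_mul]

lemma sphArea_rpow_mul_le_of_dualHardy_bound {n : ℕ} (hn : 0 < n) {p pb1 pb2 C : ℝ}
    (hp : 0 < p) (hpb1 : pb1 ≠ 0) (hpb2 : pb2 ≠ 0)
    (hbound : ∀ f : Euc n → ℝ, (∀ x, 0 ≤ f x) → Measurable f →
      mixedNorm n p pb2 (dualHardyOp n f) ≤ C * mixedNorm n p pb1 f)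
    {a : ℝ} (hap : n < a * p) :
    sphArea n ^ (1 / pb2 - 1 / pb1) * (n / a) ≤ C := by
  have ha : 0 < a := pos_of_mul_pos_left ((Nat.cast_pos.mpr hn).trans hap) hp.le
  have hω := sphArea_pos hn
  have htail_pos : 0 < radialNorm n p (powerTail a) := by
    have : 0 < a * p - n := by linarith
    rw [radialNorm_powerTail n hp hap]
    positivity
  have htest := hbound _ (fun x => powerTail_nonneg a ‖x‖)
    ((measurable_powerTail a).comp measurable_norm)
  rw [funext (dualHardyOp_powerTail hn ha),
    mixedNorm_of_radial hn hp.ne' hpb2 (fun r => n / a * max r 1 ^ (-a)),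
    mixedNorm_of_radial hn hp.ne' hpb1] at htest
  have hcompare : sphArea n ^ (1 / pb2) * (n / a) * radialNorm n p (powerTail a) ≤
      C * sphArea n ^ (1 / pb1) * radialNorm n p (powerTail a) :=
    calc sphArea n ^ (1 / pb2) * (n / a) * radialNorm n p (powerTail a)
        = sphArea n ^ (1 / pb2) * (n / a * radialNorm n p (powerTail a)) := by ring
      _ ≤ sphArea n ^ (1 / pb2) * radialNorm n p (fun r => n / a * max r 1 ^ (-a)) := by
          gcongr
          exact mul_radialNorm_powerTail_le hn hp hap
      _ ≤ C * (sphArea n ^ (1 / pb1) * radialNorm n p (powerTail a)) := htest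
      _ = C * sphArea n ^ (1 / pb1) * radialNorm n p (powerTail a) := by ring
  rw [Real.rpow_sub hω, div_mul_eq_mul_div, div_le_iff₀ (by positivity)]
  exact le_of_mul_le_mul_right hcompare htail_pos

theorem dualHardy_mixed_sharp_general (n : ℕ) (hn : 2 ≤ n) (p pb1 pb2 : ℝ)
    (hp : 1 < p) (hpb1 : 1 < pb1) (hpb2 : 1 < pb2)
    (C : ℝ)
    (hbound : ∀ f : Euc n → ℝ, (∀ x, 0 ≤ f x) → Measurable f →
      mixedNorm n p pb2 (dualHardyOp n f) ≤ C * mixedNorm n p pb1 f) :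
    p * sphArea n ^ (1 / pb2 - 1 / pb1) ≤ C := by
  have hp0 : 0 < p := by linarith
  have hn0 : (0 : ℝ) < n := by exact_mod_cast (by omega : 0 < n)
  set c := sphArea n ^ (1 / pb2 - 1 / pb1)
  have hlim : Tendsto (fun a : ℝ => c * (n / a)) (𝓝[>] (n / p)) (𝓝 (c * (n / (n / p)))) :=
    ((continuousAt_const.div continuousAt_id (div_pos hn0 hp0).ne').const_mul c).tendsto.mono_left
      nhdsWithin_le_nhds
  rw [div_div_cancel₀ hn0.ne', mul_comm] at hlim
  refine le_of_tendsto hlim (eventually_nhdsWithin_of_forall fun a (ha : n / p < a) => ?_)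
  exact sphArea_rpow_mul_le_of_dualHardy_bound (by omega) hp0 (zero_lt_one.trans hpb1).ne'
    (zero_lt_one.trans hpb2).ne' hbound ((div_lt_iff₀ hp0).mp ha)

/-- sharpness of the constant p·ω_n^{1/p̄₂-1/p̄₁} for the dual Hardy operator. -/
theorem dualHardy_mixed_sharp (n : ℕ) (hn : 2 ≤ n) (p pb1 pb2 : ℝ)
    (hp : 1 < p) (hpb1 : 1 < pb1) (hpb2 : 1 < pb2)
    (C : ℝ) (hC : 0 ≤ C)
    (hbound : ∀ f : Euc n → ℝ, (∀ x, 0 ≤ f x) → Measurable f →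
      mixedNorm n p pb2 (dualHardyOp n f) ≤ C * mixedNorm n p pb1 f) :
    p * sphArea n ^ (1 / pb2 - 1 / pb1) ≤ C :=
  dualHardy_mixed_sharp_general n hn p pb1 pb2 hp hpb1 hpb2 C hbound

end
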